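/- arXiv:1510.00586 — 2 statements merged into one kernel-verified Lean document; each statement's English description precedes it below -/
import Mathlib

section
/- Submodularity of dimension: let M be a graph every finite induced subgraph of which lies in K₀, and let A, B be finite sets of vertices of M. Then dim(A ∪ B) + dim(A ∩ B) ≤ dim(A) + dim(B). -/
open scoped Cardinal

/-- Number of edges of the graph `G` with both endpoints in `A`
(ordered pairs counted and divided by two). -/
noncomputable def edgeCount {V : Type*} (G : SimpleGraph V) (A : Set V) : ℕ :=
  {p : V × V | p.1 ∈ A ∧ p.2 ∈ A ∧ G.Adj p.1 p.2}.ncard / 2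

/-- The pre-dimension `δ(A) = m·|A| − e(A)`. -/
noncomputable def delta {V : Type*} (m : ℕ) (G : SimpleGraph V) (A : Set V) : ℤ :=
  (m : ℤ) * A.ncard - edgeCount G A

/-- `A` is self-sufficient (`≤`-closed) in `B`:  `A ⊆ B` and `δ(A') ≥ δ(A)` for
every finite `A'` with `A ⊆ A' ⊆ B`. -/
def SelfSuff {V : Type*} (m : ℕ) (G : SimpleGraph V) (A B : Set V) : Prop :=
  A ⊆ B ∧ ∀ A' : Set V, A'.Finite → A ⊆ A' → A' ⊆ B → delta m G A ≤ delta m G A'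

/-- A graph belongs to the class `K₀` if `δ(A') ≥ 0` for every set `A'` of its
vertices (used for finite graphs). -/
def InK0 {V : Type*} (m : ℕ) (G : SimpleGraph V) : Prop :=
  ∀ A : Set V, 0 ≤ delta m G A

/-- `G` is a `(K₀,≤)`-generic graph: (i) it is the union of an increasing chain of
finite self-sufficient subsets; (ii) every isomorphism between finite self-sufficient
induced subgraphs extends to an automorphism; (iii) every finite graph in `K₀` is
isomorphic to the induced subgraph on some finite self-sufficient subset. -/
def IsGeneric (m : ℕ) {V : Type} (G : SimpleGraph V) : Prop :=
  (∃ F : ℕ → Set V, (∀ n, (F n).Finite) ∧ (∀ n, F n ⊆ F (n + 1)) ∧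
      (∀ n, SelfSuff m G (F n) Set.univ) ∧ (⋃ n, F n) = Set.univ) ∧
  (∀ A B : Set V, A.Finite → B.Finite → SelfSuff m G A Set.univ → SelfSuff m G B Set.univ →
      ∀ e : G.induce A ≃g G.induce B, ∃ g : G ≃g G, ∀ a : A, g a = (e a : V)) ∧
  (∀ (W : Type) (_ : Fintype W) (H : SimpleGraph W), InK0 m H →
      ∃ s : Set V, s.Finite ∧ SelfSuff m G s Set.univ ∧ Nonempty (H ≃g G.induce s))

/-- The self-sufficient closure `cl(A)`: the intersection of all finite
self-sufficient subsets of the ambient graph containing `A` (which is the smallest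
such set whenever a smallest one exists). -/
def scl {V : Type*} (m : ℕ) (G : SimpleGraph V) (A : Set V) : Set V :=
  ⋂₀ {B : Set V | A ⊆ B ∧ B.Finite ∧ SelfSuff m G B Set.univ}

/-- The dimension `d(A) = δ(cl(A))`. -/
noncomputable def gdim {V : Type*} (m : ℕ) (G : SimpleGraph V) (A : Set V) : ℤ :=
  delta m G (scl m G A)

/-- The geometric closure
`gcl(X) = { v : d(A ∪ {v}) = d(A) for some finite A ⊆ X }`. -/
def gcl {V : Type*} (m : ℕ) (G : SimpleGraph V) (X : Set V) : Set V :=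
  {v | ∃ A : Set V, A ⊆ X ∧ A.Finite ∧ gdim m G (A ∪ {v}) = gdim m G A}

/-- The pointwise stabilizer `Aut_A(M)` of a set `A` of vertices, as a subgroup of
the automorphism group. -/
def pointStab {V : Type*} (G : SimpleGraph V) (A : Set V) : Subgroup (G ≃g G) where
  carrier := {g | ∀ a ∈ A, g a = a}
  one_mem' := fun a _ => rfl
  mul_mem' := by
    intro g h hg hh a ha
    show g (h a) = a
    rw [hh a ha, hg a ha]
  inv_mem' := by
    intro g hg a ha
    show g⁻¹ a = a
    conv_lhs => rw [← hg a ha]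
    simp

/-- The setwise stabilizer `Aut_{{X}}(M) = { g : g[X] = X }` of a set `X` of
vertices, as a subgroup of the automorphism group. -/
def setStab {V : Type*} (G : SimpleGraph V) (X : Set V) : Subgroup (G ≃g G) where
  carrier := {g | (fun v => g v) '' X = X}
  one_mem' := by simp
  mul_mem' := by
    intro g h hg hh
    show (fun v => g (h v)) '' X = X
    rw [show (fun v => g (h v)) = (fun v => g v) ∘ (fun v => h v) from rfl,
      Set.image_comp, hh, hg]
  inv_mem' := by
    intro g hg
    show (fun v => g⁻¹ v) '' X = X
    conv_lhs => rw [← hg]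
    rw [← Set.image_comp]
    have : (fun v => g⁻¹ v) ∘ (fun v => g v) = id := by
      funext v
      show g⁻¹ (g v) = v
      simp
    rw [this, Set.image_id]

/-- The topology of pointwise convergence on the automorphism group of a graph
(the vertex set being discrete). -/
def autTop (V : Type*) (G : SimpleGraph V) : TopologicalSpace (G ≃g G) :=
  TopologicalSpace.induced (fun g => (g : V → V))
    (@Pi.topologicalSpace V (fun _ => V) (fun _ => ⊥))


section Aux

variable {V : Type*} (G : SimpleGraph V)

def pset (A : Set V) : Set (V × V) :=
  {p : V × V | p.1 ∈ A ∧ p.2 ∈ A ∧ G.Adj p.1 p.2}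

lemma pset_finite {A : Set V} (hA : A.Finite) : (pset G A).Finite := by
  apply (hA.prod hA).subset
  rintro ⟨x, y⟩ ⟨h1, h2, _⟩
  exact ⟨h1, h2⟩

lemma pset_even {A : Set V} (hA : A.Finite) : Even (pset G A).ncard := by
  classical
  letI : LinearOrder V := linearOrderOfSTO WellOrderingRel
  set S₁ : Set (V × V) := {p ∈ pset G A | p.1 < p.2} with hS₁
  set S₂ : Set (V × V) := {p ∈ pset G A | p.2 < p.1} with hS₂
  have hU : pset G A = S₁ ∪ S₂ := by
    ext ⟨x, y⟩
    constructor
    · intro hp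
      rcases lt_trichotomy x y with h | h | h
      · exact Or.inl ⟨hp, h⟩
      · exact absurd h hp.2.2.ne
      · exact Or.inr ⟨hp, h⟩
    · rintro (⟨hp, _⟩ | ⟨hp, _⟩) <;> exact hp
  have hd : Disjoint S₁ S₂ := by
    rw [Set.disjoint_left]
    rintro ⟨x, y⟩ ⟨_, h1⟩ ⟨_, h2⟩
    exact absurd h1 (not_lt.2 h2.le)
  have h1f : S₁.Finite := (pset_finite G hA).subset (Set.sep_subset _ _)
  have h2f : S₂.Finite := (pset_finite G hA).subset (Set.sep_subset _ _)
  have himg : Prod.swap '' S₁ = S₂ := by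
    ext ⟨x, y⟩
    constructor
    · rintro ⟨⟨a, b⟩, ⟨⟨ha, hb, hadj⟩, hlt⟩, heq⟩
      cases heq
      exact ⟨⟨hb, ha, hadj.symm⟩, hlt⟩
    · rintro ⟨⟨hx, hy, hadj⟩, hlt⟩
      exact ⟨(y, x), ⟨⟨hy, hx, hadj.symm⟩, hlt⟩, rfl⟩
  have hcard : S₂.ncard = S₁.ncard := by
    rw [← himg, Set.ncard_image_of_injective _ Prod.swap_injective]
  rw [hU, Set.ncard_union_eq hd h1f h2f, hcard]
  exact ⟨S₁.ncard, rfl⟩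

lemma two_mul_edgeCount {A : Set V} (hA : A.Finite) :
    2 * edgeCount G A = (pset G A).ncard := by
  obtain ⟨k, hk⟩ := pset_even G hA
  have : (pset G A).ncard = 2 * k := by omega
  show 2 * ((pset G A).ncard / 2) = _
  omega

lemma pset_submod {X Y : Set V} (hX : X.Finite) (hY : Y.Finite) :
    (pset G X).ncard + (pset G Y).ncard ≤ (pset G (X ∪ Y)).ncard + (pset G (X ∩ Y)).ncard := by
  have h1 : pset G X ∪ pset G Y ⊆ pset G (X ∪ Y) := by
    rintro ⟨x, y⟩ (⟨h1, h2, h3⟩ | ⟨h1, h2, h3⟩)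
    · exact ⟨Or.inl h1, Or.inl h2, h3⟩
    · exact ⟨Or.inr h1, Or.inr h2, h3⟩
  have h2 : pset G X ∩ pset G Y = pset G (X ∩ Y) := by
    ext ⟨x, y⟩
    constructor
    · rintro ⟨⟨a1, a2, a3⟩, ⟨b1, b2, _⟩⟩
      exact ⟨⟨a1, b1⟩, ⟨a2, b2⟩, a3⟩
    · rintro ⟨⟨a1, b1⟩, ⟨a2, b2⟩, a3⟩
      exact ⟨⟨a1, a2, a3⟩, ⟨b1, b2, a3⟩⟩
  have h3 := Set.ncard_union_add_ncard_inter (pset G X) (pset G Y)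
    (pset_finite G hX) (pset_finite G hY)
  have h4 : (pset G X ∪ pset G Y).ncard ≤ (pset G (X ∪ Y)).ncard :=
    Set.ncard_le_ncard h1 (pset_finite G (hX.union hY))
  rw [h2] at h3
  omega

lemma delta_submod (m : ℕ) {X Y : Set V} (hX : X.Finite) (hY : Y.Finite) :
    delta m G (X ∪ Y) + delta m G (X ∩ Y) ≤ delta m G X + delta m G Y := by
  have hcard : (X ∪ Y).ncard + (X ∩ Y).ncard = X.ncard + Y.ncard :=
    Set.ncard_union_add_ncard_inter _ _ hX hY
  have hedge : edgeCount G X + edgeCount G Y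
      ≤ edgeCount G (X ∪ Y) + edgeCount G (X ∩ Y) := by
    have := pset_submod G hX hY
    have e1 := two_mul_edgeCount G hX
    have e2 := two_mul_edgeCount G hY
    have e3 := two_mul_edgeCount G (hX.union hY)
    have e4 := two_mul_edgeCount G (A := X ∩ Y) (hX.subset Set.inter_subset_left)
    omega
  unfold delta
  have hc : ((X ∪ Y).ncard : ℤ) + (X ∩ Y).ncard = X.ncard + Y.ncard := by
    exact_mod_cast hcard
  have he : (edgeCount G X : ℤ) + edgeCount G Y
      ≤ edgeCount G (X ∪ Y) + edgeCount G (X ∩ Y) := by exact_mod_cast hedge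
  nlinarith [hc, he]

end Aux

section Aux2

variable {V : Type*} (m : ℕ) (G : SimpleGraph V)

lemma inter_delta_le {X C : Set V} (hX : X.Finite) (hC : C.Finite)
    (hss : SelfSuff m G X Set.univ) : delta m G (X ∩ C) ≤ delta m G C := by
  have h1 := delta_submod G m hX hC
  have h2 := hss.2 (X ∪ C) (hX.union hC) Set.subset_union_left (Set.subset_univ _)
  linarith

lemma inter_selfSuff {X Y : Set V} (hX : X.Finite) (hY : Y.Finite)
    (hssX : SelfSuff m G X Set.univ) (hssY : SelfSuff m G Y Set.univ) :
    SelfSuff m G (X ∩ Y) Set.univ := by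
  refine ⟨Set.subset_univ _, fun C hCf hsub _ => ?_⟩
  have hXY : X ∩ Y = X ∩ (Y ∩ C) := by
    ext x; constructor
    · intro hx; exact ⟨hx.1, hx.2, hsub hx⟩
    · intro hx; exact ⟨hx.1, hx.2.1⟩
  calc delta m G (X ∩ Y) = delta m G (X ∩ (Y ∩ C)) := by rw [hXY]
    _ ≤ delta m G (Y ∩ C) := inter_delta_le m G hX (hY.inter_of_left C) hssX
    _ ≤ delta m G C := inter_delta_le m G hY hCf hssY

variable (hK0 : ∀ A : Set V, A.Finite → 0 ≤ delta m G A)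
include hK0

lemma exists_ss_superset {A : Set V} (hA : A.Finite) :
    ∃ B : Set V, A ⊆ B ∧ B.Finite ∧ SelfSuff m G B Set.univ ∧ delta m G B ≤ delta m G A := by
  set T : Set ℕ := {n : ℕ | ∃ B : Set V, A ⊆ B ∧ B.Finite ∧ delta m G B = (n : ℤ)} with hT
  have hTne : T.Nonempty := ⟨(delta m G A).toNat, A, subset_rfl, hA, (Int.toNat_of_nonneg (hK0 A hA)).symm⟩
  obtain ⟨B, hAB, hBf, hBd⟩ := Nat.sInf_mem hTne
  have hmin : ∀ C : Set V, A ⊆ C → C.Finite → delta m G B ≤ delta m G C := by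
    intro C hAC hCf
    have hmem : (delta m G C).toNat ∈ T := ⟨C, hAC, hCf, (Int.toNat_of_nonneg (hK0 C hCf)).symm⟩
    have := Nat.sInf_le hmem
    have h2 := Int.toNat_of_nonneg (hK0 C hCf)
    omega
  exact ⟨B, hAB, hBf, ⟨Set.subset_univ _, fun C hCf hBC _ => hmin C (hAB.trans hBC) hCf⟩,
    hmin A subset_rfl hA⟩

lemma scl_spec {A : Set V} (hA : A.Finite) :
    A ⊆ scl m G A ∧ (scl m G A).Finite ∧ SelfSuff m G (scl m G A) Set.univ := by
  set Sfam : Set (Set V) := {B : Set V | A ⊆ B ∧ B.Finite ∧ SelfSuff m G B Set.univ} with hSfam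
  set T : Set ℕ := {n : ℕ | ∃ B ∈ Sfam, B.ncard = n} with hT
  obtain ⟨B₀, hAB₀, hB₀f, hB₀ss, _⟩ := exists_ss_superset m G hK0 hA
  have hTne : T.Nonempty := ⟨B₀.ncard, B₀, ⟨hAB₀, hB₀f, hB₀ss⟩, rfl⟩
  obtain ⟨C, hCmem, hCcard⟩ := Nat.sInf_mem hTne
  have hCsub : ∀ B ∈ Sfam, C ⊆ B := by
    intro B hB
    have hmemCB : C ∩ B ∈ Sfam :=
      ⟨Set.subset_inter hCmem.1 hB.1, hCmem.2.1.inter_of_left B,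
        inter_selfSuff m G hCmem.2.1 hB.2.1 hCmem.2.2 hB.2.2⟩
    have h1 : sInf T ≤ (C ∩ B).ncard := Nat.sInf_le ⟨C ∩ B, hmemCB, rfl⟩
    have heq : C ∩ B = C :=
      Set.eq_of_subset_of_ncard_le Set.inter_subset_left (by omega) hCmem.2.1
    intro x hx
    rw [← heq] at hx
    exact hx.2
  have hscl : scl m G A = C := by
    apply subset_antisymm
    · exact Set.sInter_subset_of_mem hCmem
    · exact Set.subset_sInter (fun B hB => hCsub B hB)
  rw [hscl]
  exact ⟨hCmem.1, hCmem.2.1, hCmem.2.2⟩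

lemma delta_scl_le_of_mem {A B : Set V} (hA : A.Finite) (hAB : A ⊆ B) (hBf : B.Finite)
    (hBss : SelfSuff m G B Set.univ) : delta m G (scl m G A) ≤ delta m G B := by
  obtain ⟨_, _, hss⟩ := scl_spec m G hK0 hA
  have hsub : scl m G A ⊆ B := Set.sInter_subset_of_mem ⟨hAB, hBf, hBss⟩
  exact hss.2 B hBf hsub (Set.subset_univ _)

lemma delta_scl_le {A : Set V} (hA : A.Finite) : delta m G (scl m G A) ≤ delta m G A := by
  obtain ⟨B, hAB, hBf, hBss, hBd⟩ := exists_ss_superset m G hK0 hA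
  exact (delta_scl_le_of_mem m G hK0 hA hAB hBf hBss).trans hBd

lemma gdim_mono {A B : Set V} (hA : A.Finite) (hB : B.Finite) (hAB : A ⊆ B) :
    gdim m G A ≤ gdim m G B := by
  obtain ⟨hsub, hf, hss⟩ := scl_spec m G hK0 hB
  exact delta_scl_le_of_mem m G hK0 hA (hAB.trans hsub) hf hss

end Aux2

/-- Submodularity of the dimension: in a graph all of whose finite induced
subgraphs lie in `K₀`, `d(A ∪ B) + d(A ∩ B) ≤ d(A) + d(B)` for finite `A`, `B`. -/
theorem gdim_submodular {V : Type*} (m : ℕ) (hm : 2 ≤ m) (G : SimpleGraph V)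
    (hK0 : ∀ A : Set V, A.Finite → 0 ≤ delta m G A)
    (A B : Set V) (hA : A.Finite) (hB : B.Finite) :
    gdim m G (A ∪ B) + gdim m G (A ∩ B) ≤ gdim m G A + gdim m G B := by
  obtain ⟨hAsub, hXf, hXss⟩ := scl_spec m G hK0 hA
  obtain ⟨hBsub, hYf, hYss⟩ := scl_spec m G hK0 hB
  set X := scl m G A
  set Y := scl m G B
  have h1 : delta m G (X ∪ Y) + delta m G (X ∩ Y) ≤ gdim m G A + gdim m G B :=
    delta_submod G m hXf hYf
  have h2 : gdim m G (A ∪ B) ≤ delta m G (X ∪ Y) := by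
    have := gdim_mono m G hK0 (hA.union hB) (hXf.union hYf) (Set.union_subset_union hAsub hBsub)
    exact this.trans (delta_scl_le m G hK0 (hXf.union hYf))
  have h3 : gdim m G (A ∩ B) ≤ delta m G (X ∩ Y) :=
    delta_scl_le_of_mem m G hK0 (hA.inter_of_left B)
      (Set.inter_subset_inter hAsub hBsub) (hXf.inter_of_left Y)
      (inter_selfSuff m G hXf hYf hXss hYss)
  linarith
end

section
/- Transfer of the small index property: let M be the countable (K₀,≤)-generic graph, let A be a finite set of vertices of M, let X = gcl(A), and let G = Aut(M) and G_{{X}} the setwise stabilizer of X in G. Suppose that every subgroup K of G_{{X}} with |G_{{X}}/K| < 2^ℵ₀ contains G_B ∩ G_{{X}} for some finite set B of vertices of M (where G_B is the pointwise stabilizer of B). Then every subgroup H of G with |G/H| < 2^ℵ₀ contains G_B for some finite set B of vertices of M. -/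
open scoped Cardinal

/-!
δ, self-sufficiency, `cl`, `dim` and `gcl` are all defined from the graph alone, so graph
isomorphisms transport them; in particular an automorphism fixing `A` pointwise maps
`X = gcl(A)` onto itself, i.e. `G_A ≤ G_{X}`. If `H` has small index in `G`, then
`H ∩ G_{X}` has index in `G_{X}` at most `|G : H|`, so by hypothesis it contains
`G_B ∩ G_{X}` for a finite `B`, and then `G_{A ∪ B} ≤ H`.
-/

open Cardinal in
theorem Subgroup.mk_quotient_subgroupOf_le {α : Type*} [Group α] (H K : Subgroup α) :
    #(K ⧸ H.subgroupOf K) ≤ #(α ⧸ H) :=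
  mk_le_of_injective (f := Quotient.map' Subtype.val fun _ _ h => by
      simpa [QuotientGroup.leftRel_apply, Subgroup.mem_subgroupOf] using h) <|
    Quotient.ind₂' fun _ _ h => Quotient.sound' <| by
      simpa [QuotientGroup.leftRel_apply, Subgroup.mem_subgroupOf] using Quotient.exact' h

section Transport

variable {V W : Type*} {G : SimpleGraph V} {G' : SimpleGraph W} (m : ℕ) (g : G ≃g G')

theorem edgeCount_image (S : Set V) : edgeCount G' (g '' S) = edgeCount G S := by
  have hpairs : {p : W × W | p.1 ∈ g '' S ∧ p.2 ∈ g '' S ∧ G'.Adj p.1 p.2}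
      = Prod.map g g '' {p : V × V | p.1 ∈ S ∧ p.2 ∈ S ∧ G.Adj p.1 p.2} := by
    ext ⟨x, y⟩
    constructor
    · rintro ⟨⟨a, ha, rfl⟩, ⟨b, hb, rfl⟩, hadj⟩
      exact ⟨(a, b), ⟨ha, hb, g.map_adj_iff.mp hadj⟩, rfl⟩
    · rintro ⟨⟨a, b⟩, ⟨ha, hb, hadj⟩, hab⟩
      cases hab
      exact ⟨⟨a, ha, rfl⟩, ⟨b, hb, rfl⟩, g.map_adj_iff.mpr hadj⟩
  rw [edgeCount, edgeCount, hpairs,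
    Set.ncard_image_of_injective _ (g.injective.prodMap g.injective)]

theorem delta_image (S : Set V) : delta m G' (g '' S) = delta m G S := by
  rw [delta, delta, Set.ncard_image_of_injective _ g.injective, edgeCount_image]

theorem SelfSuff.image {S B : Set V} (h : SelfSuff m G S B) :
    SelfSuff m G' (g '' S) (g '' B) := by
  refine ⟨Set.image_mono h.1, fun A' hA' hSA' hA'B => ?_⟩
  have hback : g '' (g.symm '' A') = A' := by simp [Set.image_image]
  rw [← hback] at hSA' hA'B ⊢
  rw [Set.image_subset_image_iff g.injective] at hSA' hA'B
  rw [delta_image, delta_image]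
  exact h.2 _ (hA'.image _) hSA' hA'B

theorem scl_image_subset (A : Set V) : scl m G' (g '' A) ⊆ g '' scl m G A := by
  intro x hx
  refine ⟨g.symm x, fun B ⟨hAB, hB, hBss⟩ => ?_, g.apply_symm_apply x⟩
  have hgB := Set.image_univ_of_surjective g.surjective ▸ hBss.image m g
  obtain ⟨b, hb, rfl⟩ := hx (g '' B) ⟨Set.image_mono hAB, hB.image g, hgB⟩
  simpa using hb

theorem scl_image (A : Set V) : scl m G' (g '' A) = g '' scl m G A := by
  refine (scl_image_subset m g A).antisymm ?_
  simpa [Set.image_image] using Set.image_mono (f := g) (scl_image_subset m g.symm (g '' A))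

theorem gdim_image (A : Set V) : gdim m G' (g '' A) = gdim m G A := by
  rw [gdim, gdim, scl_image, delta_image]

theorem image_gcl_subset (X : Set V) : g '' gcl m G X ⊆ gcl m G' (g '' X) := by
  rintro _ ⟨v, ⟨A, hAX, hA, hdim⟩, rfl⟩
  refine ⟨g '' A, Set.image_mono hAX, hA.image g, ?_⟩
  rw [← Set.image_singleton, ← Set.image_union, gdim_image, gdim_image, hdim]

theorem gcl_image (X : Set V) : gcl m G' (g '' X) = g '' gcl m G X := by
  refine (image_gcl_subset m g X).antisymm' ?_
  simpa [Set.image_image] using Set.image_mono (f := g) (image_gcl_subset m g.symm (g '' X))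

end Transport

theorem pointStab_anti {V : Type*} (G : SimpleGraph V) : Antitone (pointStab G) :=
  fun _ _ hAB _ hg a ha => hg a (hAB ha)

theorem pointStab_le_setStab_gcl {V : Type*} (m : ℕ) (G : SimpleGraph V) (A : Set V) :
    pointStab G A ≤ setStab G (gcl m G A) := by
  intro g hg
  have hfix : g '' A = A := by
    simpa using Set.image_congr (fun a ha => (hg a ha : g a = a))
  show g '' gcl m G A = gcl m G A
  rw [← gcl_image, hfix]

theorem small_index_transfer_general (m : ℕ) (V : Type) (G : SimpleGraph V) (A : Set V) (hA : A.Finite)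
    (hyp : ∀ K : Subgroup (setStab G (gcl m G A)),
      Cardinal.mk ((setStab G (gcl m G A)) ⧸ K) < Cardinal.continuum →
      ∃ B : Set V, B.Finite ∧ (pointStab G B).subgroupOf (setStab G (gcl m G A)) ≤ K) :
    ∀ H : Subgroup (G ≃g G), Cardinal.mk ((G ≃g G) ⧸ H) < Cardinal.continuum →
      ∃ B : Set V, B.Finite ∧ pointStab G B ≤ H := by
  intro H hH
  obtain ⟨B, hB, hBH⟩ :=
    hyp (H.subgroupOf _) ((H.mk_quotient_subgroupOf_le _).trans_lt hH)
  refine ⟨B ∪ A, hB.union hA, fun g hg => ?_⟩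
  have hgX : g ∈ setStab G (gcl m G A) :=
    pointStab_le_setStab_gcl m G A (pointStab_anti G Set.subset_union_right hg)
  have hgB : (⟨g, hgX⟩ : setStab G (gcl m G A)) ∈ (pointStab G B).subgroupOf _ :=
    pointStab_anti G Set.subset_union_left hg
  exact hBH hgB

/-- Transfer of the small index property from the setwise stabilizer of
`X = gcl(A)` to the whole automorphism group. -/
theorem small_index_transfer (m : ℕ) (hm : 2 ≤ m) (V : Type)
    [Countable V] [Infinite V] (G : SimpleGraph V) (hG : IsGeneric m G)
    (A : Set V) (hA : A.Finite)
    (hyp : ∀ K : Subgroup (setStab G (gcl m G A)),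
      Cardinal.mk ((setStab G (gcl m G A)) ⧸ K) < Cardinal.continuum →
      ∃ B : Set V, B.Finite ∧ (pointStab G B).subgroupOf (setStab G (gcl m G A)) ≤ K) :
    ∀ H : Subgroup (G ≃g G), Cardinal.mk ((G ≃g G) ⧸ H) < Cardinal.continuum →
      ∃ B : Set V, B.Finite ∧ pointStab G B ≤ H :=
  small_index_transfer_general m V G A hA hyp
end
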